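/- For every k > 3, the updated bisplitter B'_k (the bisplitter B_k with initial partition π'₀ = { {0^k}, B_0 \ {0^k}, {1·0^{k−1}}, B_1 \ {1·0^{k−1}} }) satisfies IRC(B'_k) ≥ (k−3)·2^{k−3}. Consequently, with n = 2^k the number of states, deciding bisimilarity for the bisplitters by partition refinement with an end structure oracle requires moving at least (1/8)·n·log₂(n/8) states, i.e., is Ω(n log n). -/

import Mathlib

/-! ## Labeled transition systems with initial partition, partitions, refinement -/

structure LTS (S A : Type) where
  tr : S → A → S → Prop
  init : Finset (Finset S)

def inSameBlock {S : Type} (π : Finset (Finset S)) (s t : S) : Prop :=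
  ∃ B ∈ π, s ∈ B ∧ t ∈ B

def IsBlockPartition {S : Type} (π : Finset (Finset S)) : Prop :=
  ∅ ∉ π ∧ (∀ B ∈ π, ∀ B' ∈ π, B ≠ B' → Disjoint B B') ∧ ∀ s : S, ∃ B ∈ π, s ∈ B

def RefinesPart {S : Type} (π' π : Finset (Finset S)) : Prop :=
  ∀ B' ∈ π', ∃ B ∈ π, B' ⊆ B

def ReachesSet {S A : Type} (L : LTS S A) (s : S) (a : A) (U : Finset S) : Prop :=
  ∃ t ∈ U, L.tr s a t

def StableUnderBlock {S A : Type} (L : LTS S A) (V U : Finset S) : Prop :=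
  ∀ a : A, (∀ s ∈ V, ReachesSet L s a U) ∨ (∀ s ∈ V, ¬ ReachesSet L s a U)

def IsStablePartition {S A : Type} (L : LTS S A) (π : Finset (Finset S)) : Prop :=
  ∀ B ∈ π, ∀ C ∈ π, StableUnderBlock L B C

def SplitWitness {S A : Type} (L : LTS S A) (π : Finset (Finset S)) (s t : S) : Prop :=
  ∃ a s', L.tr s a s' ∧ ∀ t', L.tr t a t' → ¬ inSameBlock π s' t'

def ValidRefinement {S A : Type} (L : LTS S A) (π π' : Finset (Finset S)) : Prop :=
  RefinesPart π' π ∧ π' ≠ π ∧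
  ∀ s t : S, ¬ inSameBlock π' s t →
    (¬ inSameBlock π s t ∨ SplitWitness L π s t ∨ SplitWitness L π t s)

def ValidRefinementSeq {S A : Type} (L : LTS S A) (n : ℕ)
    (seq : ℕ → Finset (Finset S)) : Prop :=
  seq 0 = L.init ∧ (∀ i ≤ n, IsBlockPartition (seq i)) ∧
  (∀ i < n, ValidRefinement L (seq i) (seq (i + 1))) ∧
  IsStablePartition L (seq n)

/-! ## Refinement costs -/

def IRCstep {S : Type} [DecidableEq S] (π π' : Finset (Finset S)) : ℕ :=
  ∑ B ∈ π, (B.card - (π'.filter fun B' => B' ⊆ B).sup Finset.card)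

def IRCseq {S : Type} [DecidableEq S] (n : ℕ) (seq : ℕ → Finset (Finset S)) : ℕ :=
  ∑ i ∈ Finset.range n, IRCstep (seq i) (seq (i + 1))

noncomputable def IRC {S A : Type} [DecidableEq S] (L : LTS S A) : ℕ :=
  sInf {c | ∃ n seq, ValidRefinementSeq L n seq ∧ IRCseq n seq = c}

noncomputable def PIRC {S A : Type} (L : LTS S A) : ℕ :=
  sInf {n | ∃ seq, ValidRefinementSeq L n seq}

/-! ## Bisimulation, end structures, paths -/

def IsBisimulation {S A : Type} (L : LTS S A) (R : S → S → Prop) : Prop :=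
  Symmetric R ∧ (∀ s t, R s t → inSameBlock L.init s t) ∧
  ∀ s t a s', R s t → L.tr s a s' → ∃ t', L.tr t a t' ∧ R s' t'

def Bisimilar {S A : Type} (L : LTS S A) (s t : S) : Prop :=
  ∃ R, IsBisimulation L R ∧ R s t

def TransClosed {S A : Type} (L : LTS S A) (U : Set S) : Prop :=
  ∀ s ∈ U, ∀ a t, L.tr s a t → t ∈ U

def EndStructure {S A : Type} (L : LTS S A) (U : Set S) : Prop :=
  U.Nonempty ∧ TransClosed L U ∧
  ∀ V : Set S, TransClosed L V → (U ∩ V).Nonempty → U ⊆ V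

def PathTo {S A : Type} (L : LTS S A) : List A → S → S → Prop
  | [], s, t => s = t
  | a :: w, s, t => ∃ u, L.tr s a u ∧ PathTo L w u t

/-! ## The bisplitter B_k -/

def bsStep {k : ℕ} (σ : Fin k → Bool) (j : Fin (k - 1)) : Fin k → Bool :=
  if σ ⟨j.val + 1, by have := j.isLt; omega⟩ = false then σ
  else fun p => if p.val < j.val then σ p else if p.val = j.val then !(σ p) else false

def prefixBlock (k : ℕ) (p : List Bool) : Finset (Fin k → Bool) :=
  Finset.univ.filter fun σ => p <+: List.ofFn σ

def bisplitter (k : ℕ) : LTS (Fin k → Bool) (Fin (k - 1)) where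
  tr := fun s a t => t = bsStep s a
  init := {prefixBlock k [false], prefixBlock k [true]}

def zeroState (k : ℕ) : Fin k → Bool := fun _ => false

def oneState (k : ℕ) : Fin k → Bool := fun i => decide (i.val = 0)

/-- The bisplitter with the initial partition updated by the end structure oracle. -/
def bisplitter' (k : ℕ) : LTS (Fin k → Bool) (Fin (k - 1)) where
  tr := (bisplitter k).tr
  init := { {zeroState k}, prefixBlock k [false] \ {zeroState k},
            {oneState k}, prefixBlock k [true] \ {oneState k} }

/-! ## The layered bisplitter C_k -/

def treeHeight (k : ℕ) : ℕ := Nat.clog 2 (k / 2)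

abbrev TreeWord (h : ℕ) := Σ i : Fin (h + 1), Fin i.val → Bool

abbrev CState (k : ℕ) :=
  ((Fin k → Bool) × Fin (2 ^ k)) ⊕ ((Fin k → Bool) × TreeWord (treeHeight k))

instance instCStateDecEq (k : ℕ) : DecidableEq (CState k) := inferInstance

instance instCStateFintype (k : ℕ) : Fintype (CState k) := inferInstance

def rootWord (k : ℕ) : TreeWord (treeHeight k) := ⟨⟨0, Nat.succ_pos _⟩, Fin.elim0⟩

def binVal (w : List Bool) : ℕ := w.foldl (fun acc b => 2 * acc + b.toNat) 0

/-- The a_j-successor in B_k for j = lbl(v) = min(bin(v)+1, k-1) (1-based),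
    i.e. 0-based index min(bin(v), k-2). -/
def bkSucc (k : ℕ) (σ : Fin k → Bool) (v : List Bool) : Fin k → Bool :=
  if h : min (binVal v) (k - 2) < k - 1 then bsStep σ ⟨min (binVal v) (k - 2), h⟩ else σ

def cTr (k : ℕ) (s : CState k) (α : Bool) (t : CState k) : Prop :=
  match s with
  | Sum.inl (σ, ℓ) =>
      if h : ℓ.val + 1 < 2 ^ k then t = Sum.inl (σ, ⟨ℓ.val + 1, h⟩)
      else t = Sum.inr (σ, rootWord k)
  | Sum.inr (σ, w) =>
      if h : w.1.val < treeHeight k then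
        t = Sum.inr (σ, ⟨⟨w.1.val + 1, by omega⟩, Fin.snoc w.2 α⟩)
      else t = Sum.inl (bkSucc k σ (List.ofFn w.2 ++ [α]), ⟨0, by positivity⟩)

def firstBit {k : ℕ} (σ : Fin k → Bool) : Bool :=
  if h : 0 < k then σ ⟨0, h⟩ else false

def stakeBlock (k : ℕ) (ℓ : Fin (2 ^ k)) (b : Bool) : Finset (CState k) :=
  Finset.univ.filter fun s => ∃ σ : Fin k → Bool, firstBit σ = b ∧ s = Sum.inl (σ, ℓ)

def treeBlock (k : ℕ) : Finset (CState k) :=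
  Finset.univ.filter fun s => s.isRight = true

def cInit (k : ℕ) : Finset (Finset (CState k)) :=
  (Finset.univ.image fun p : Fin (2 ^ k) × Bool => stakeBlock k p.1 p.2) ∪ {treeBlock k}

def layered (k : ℕ) : LTS (CState k) Bool := ⟨cTr k, cInit k⟩

/-- The stake index of level 1. -/
def firstLevel (k : ℕ) : Fin (2 ^ k) := ⟨0, by positivity⟩

/-- The stake index of level 2^k. -/
def lastLevel (k : ℕ) : Fin (2 ^ k) :=
  ⟨2 ^ k - 1, Nat.sub_lt (by positivity) one_pos⟩

def mkWord {h : ℕ} (w : List Bool) (hw : w.length ≤ h) : TreeWord h :=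
  ⟨⟨w.length, Nat.lt_succ_of_le hw⟩, fun j => w.get j⟩

def endSet (k : ℕ) (σ₀ : Fin k → Bool) : Set (CState k) :=
  {s | (∃ ℓ, s = Sum.inl (σ₀, ℓ)) ∨ ∃ w, s = Sum.inr (σ₀, w)}

/-! ## End structure partition -/

noncomputable def bisimClass {S A : Type} [Fintype S] (L : LTS S A) (s : S) : Finset S :=
  (Set.toFinite {t | Bisimilar L s t}).toFinset

def ESUnion {S A : Type} (L : LTS S A) : Set S := ⋃₀ {U | EndStructure L U}

noncomputable def esPartition {S A : Type} [Fintype S] [DecidableEq S] (L : LTS S A) :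
    Finset (Finset S) :=
  ((Set.toFinite {B : Finset S | ∃ s ∈ ESUnion L, B = bisimClass L s}).toFinset ∪
      L.init.image fun B =>
        B \ (Set.toFinite {t | ∃ s ∈ ESUnion L, Bisimilar L s t}).toFinset) \ {∅}

/-! ## The sequential splitter D_n (states 0,…,n-1 standing for 1,…,n) -/

def seqSplitter (n : ℕ) : LTS (Fin n) Unit where
  tr := fun s _ t => if h : s.val + 1 < n then t = ⟨s.val + 1, h⟩ else t = s
  init := {Finset.univ.filter fun s => s.val + 1 < n,
           Finset.univ.filter fun s => s.val + 1 = n}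

def dPart (n i : ℕ) : Finset (Finset (Fin n)) :=
  {Finset.univ.filter fun s => s.val + i < n} ∪
    (Finset.univ.filter fun s : Fin n => n ≤ s.val + i).image fun s => {s}

/-! ## The fast parallel example G_k -/

def gLTS (k : ℕ) : LTS (Fin (2 ^ k) ⊕ Fin k) Unit where
  tr := fun s _ t => ∃ (i : Fin (2 ^ k)) (j : Fin k),
    s = Sum.inl i ∧ t = Sum.inr j ∧ Nat.testBit i.val j.val = true
  init := {Finset.univ.filter fun s => s.isLeft = true} ∪
    Finset.univ.image fun j : Fin k => ({Sum.inr j} : Finset (Fin (2 ^ k) ⊕ Fin k))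
/-! ### Auxiliary development for the lower bound -/

section Aux

variable {k : ℕ}

/-- Bit `m` of a state, as a total function on `ℕ` (false beyond `k`). -/
def bitE (σ : Fin k → Bool) (m : ℕ) : Bool :=
  if h : m < k then σ ⟨m, h⟩ else false

lemma bitE_ext {u v : Fin k → Bool} (h : ∀ m, bitE u m = bitE v m) : u = v := by
  funext p
  have := h p.val
  simpa [bitE, p.isLt] using this

lemma bitE_of_ge {u : Fin k → Bool} {m : ℕ} (h : k ≤ m) : bitE u m = false := by
  simp [bitE]; omega

/-- `x` and `y` agree below `ℓ` and differ at `ℓ`. -/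
def DiffAt (x y : Fin k → Bool) (ℓ : ℕ) : Prop :=
  (∀ m, m < ℓ → bitE x m = bitE y m) ∧ bitE x ℓ ≠ bitE y ℓ

lemma DiffAt.symm {x y : Fin k → Bool} {ℓ : ℕ} (h : DiffAt x y ℓ) : DiffAt y x ℓ :=
  ⟨fun m hm => (h.1 m hm).symm, fun e => h.2 e.symm⟩

lemma DiffAt.ne {x y : Fin k → Bool} {ℓ : ℕ} (h : DiffAt x y ℓ) : x ≠ y := by
  rintro rfl; exact h.2 rfl

lemma DiffAt.lt_k {x y : Fin k → Bool} {ℓ : ℕ} (h : DiffAt x y ℓ) : ℓ < k := by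
  by_contra hg
  exact h.2 (by rw [bitE_of_ge (by omega), bitE_of_ge (by omega)])

lemma exists_diffAt {x y : Fin k → Bool} (h : x ≠ y) : ∃ ℓ, DiffAt x y ℓ := by
  have hex : ∃ m, bitE x m ≠ bitE y m := by
    by_contra hc
    push_neg at hc
    exact h (bitE_ext hc)
  classical
  refine ⟨Nat.find hex, fun m hm => ?_, Nat.find_spec hex⟩
  have := Nat.find_min hex hm
  simpa using this

lemma exists_diffAt_gt {x y : Fin k → Bool} {t : ℕ}
    (hagree : ∀ m, m ≤ t → bitE x m = bitE y m) (h : x ≠ y) :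
    ∃ ℓ, DiffAt x y ℓ ∧ t < ℓ := by
  obtain ⟨ℓ, hd⟩ := exists_diffAt h
  refine ⟨ℓ, hd, ?_⟩
  by_contra hle
  exact hd.2 (hagree ℓ (by omega))

lemma diffAt_unique {x y : Fin k → Bool} {ℓ ℓ' : ℕ}
    (h : DiffAt x y ℓ) (h' : DiffAt x y ℓ') : ℓ = ℓ' := by
  by_contra hne
  rcases Nat.lt_or_ge ℓ ℓ' with hlt | hge
  · exact h.2 (h'.1 ℓ hlt)
  · exact h'.2 (h.1 ℓ' (by omega))

/-- Characterization of the bits of `bsStep`. -/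
lemma bitE_bsStep (σ : Fin k → Bool) (j : Fin (k - 1)) (m : ℕ) :
    bitE (bsStep σ j) m =
      if bitE σ (j.val + 1) = false then bitE σ m
      else if m < j.val then bitE σ m else if m = j.val then !(bitE σ m) else false := by
  have hj1 : j.val + 1 < k := by have := j.isLt; omega
  have hj : j.val < k := by omega
  have hcond : bitE σ (j.val + 1) = σ ⟨j.val + 1, hj1⟩ := by simp [bitE, hj1]
  unfold bsStep
  by_cases hb : σ ⟨j.val + 1, by have := j.isLt; omega⟩ = false
  · rw [if_pos hb, hcond, if_pos hb]
  · rw [if_neg hb, hcond, if_neg hb]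
    by_cases hm : m < k
    · simp only [bitE, dif_pos hm]
    · have h1 : ¬ m < j.val := by omega
      have h2 : m ≠ j.val := by omega
      simp only [bitE, dif_neg hm, if_neg h1, if_neg h2]

lemma bsStep_self {σ : Fin k → Bool} {j : Fin (k - 1)}
    (h : bitE σ (j.val + 1) = false) : bsStep σ j = σ := by
  have hj1 : j.val + 1 < k := by have := j.isLt; omega
  unfold bsStep
  rw [if_pos]
  simpa [bitE, hj1] using h

lemma bsStep_eq_of_agree {σ τ : Fin k → Bool} {j : Fin (k - 1)}
    (hσ : bitE σ (j.val + 1) = true) (hτ : bitE τ (j.val + 1) = true)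
    (hag : ∀ m, m ≤ j.val → bitE σ m = bitE τ m) : bsStep σ j = bsStep τ j := by
  apply bitE_ext
  intro m
  rw [bitE_bsStep, bitE_bsStep, hσ, hτ]
  simp only [Bool.true_eq_false, if_false]
  by_cases h1 : m < j.val
  · simp [h1, hag m (by omega)]
  · by_cases h2 : m = j.val
    · subst h2; simp [h1, hag j.val (le_refl _)]
    · simp [h1, h2]

/-! ### Generic partition lemmas -/

lemma inSameBlock.symm' {S : Type} {π : Finset (Finset S)} {s t : S}
    (h : inSameBlock π s t) : inSameBlock π t s := by
  obtain ⟨B, hB, hs, ht⟩ := h; exact ⟨B, hB, ht, hs⟩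

lemma inSameBlock_refl {S : Type} {π : Finset (Finset S)} (hπ : IsBlockPartition π) (s : S) :
    inSameBlock π s s := by
  obtain ⟨B, hB, hs⟩ := hπ.2.2 s; exact ⟨B, hB, hs, hs⟩

lemma sameBlock_trans {S : Type} {π : Finset (Finset S)} (hπ : IsBlockPartition π)
    {a b c : S} (h1 : inSameBlock π a b) (h2 : inSameBlock π b c) : inSameBlock π a c := by
  obtain ⟨B, hB, ha, hb⟩ := h1
  obtain ⟨B', hB', hb', hc⟩ := h2
  have : B = B' := by
    by_contra hne
    exact (Finset.disjoint_left.1 (hπ.2.1 B hB B' hB' hne)) hb hb'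
  exact ⟨B, hB, ha, this ▸ hc⟩

lemma sameBlock_trans' {S : Type} {π : Finset (Finset S)} (hπ : IsBlockPartition π)
    {a b c : S} (h1 : inSameBlock π a c) (h2 : inSameBlock π b c) : inSameBlock π a b :=
  sameBlock_trans hπ h1 h2.symm'

lemma refines_sameBlock {S : Type} {π π' : Finset (Finset S)} (h : RefinesPart π' π)
    {s t : S} (hst : inSameBlock π' s t) : inSameBlock π s t := by
  obtain ⟨B', hB', hs, ht⟩ := hst
  obtain ⟨B, hB, hsub⟩ := h B' hB'
  exact ⟨B, hB, hsub hs, hsub ht⟩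

end Aux
section Bisp

variable {k : ℕ}

lemma bisp_tr_iff (s t : Fin k → Bool) (a : Fin (k - 1)) :
    (bisplitter' k).tr s a t ↔ t = bsStep s a := Iff.rfl

/-- `splittable` pairs: some action leads to different blocks. -/
def Splittable (π : Finset (Finset (Fin k → Bool))) (s t : Fin k → Bool) : Prop :=
  ∃ a : Fin (k - 1), ¬ inSameBlock π (bsStep s a) (bsStep t a)

lemma splitWitness_iff {π : Finset (Finset (Fin k → Bool))} {s t : Fin k → Bool} :
    SplitWitness (bisplitter' k) π s t ↔ Splittable π s t := by
  constructor
  · rintro ⟨a, s', htr, hall⟩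
    rw [bisp_tr_iff] at htr
    subst htr
    exact ⟨a, hall (bsStep t a) rfl⟩
  · rintro ⟨a, h⟩
    refine ⟨a, bsStep s a, rfl, ?_⟩
    rintro t' rfl
    exact h

lemma splittable_symm {π : Finset (Finset (Fin k → Bool))} {s t : Fin k → Bool}
    (h : Splittable π s t) : Splittable π t s := by
  obtain ⟨a, ha⟩ := h
  exact ⟨a, fun hc => ha hc.symm'⟩

/-- If a pair is in the same block and not splittable, a valid refinement keeps it together. -/
lemma stay_together {π π' : Finset (Finset (Fin k → Bool))}
    (hv : ValidRefinement (bisplitter' k) π π') {s t : Fin k → Bool}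
    (hsame : inSameBlock π s t) (hns : ¬ Splittable π s t) :
    inSameBlock π' s t := by
  by_contra hc
  rcases hv.2.2 s t hc with h | h | h
  · exact h hsame
  · exact hns (splitWitness_iff.1 h)
  · exact hns (splittable_symm (splitWitness_iff.1 h))

lemma sep_splittable {π π' : Finset (Finset (Fin k → Bool))}
    (hv : ValidRefinement (bisplitter' k) π π') {s t : Fin k → Bool}
    (hsame : inSameBlock π s t) (hsep : ¬ inSameBlock π' s t) :
    Splittable π s t := by
  by_contra hc
  exact hsep (stay_together hv hsame hc)

/-! ### The initial partition -/

lemma bitE_zeroState (m : ℕ) : bitE (zeroState k) m = false := by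
  unfold bitE zeroState; split <;> rfl

lemma bitE_oneState (m : ℕ) : bitE (oneState k) m = decide (m = 0 ∧ 0 < k) := by
  unfold bitE oneState
  split
  · rename_i h; simp; omega
  · rename_i h; simp; omega

lemma mem_prefixBlock_iff (hk : 0 < k) (b : Bool) (σ : Fin k → Bool) :
    σ ∈ prefixBlock k [b] ↔ bitE σ 0 = b := by
  unfold prefixBlock
  rw [Finset.mem_filter]
  simp only [Finset.mem_univ, true_and]
  have hne : List.ofFn σ ≠ [] := by
    simp [List.ofFn_eq_nil_iff]; omega
  have hhead : (List.ofFn σ).head hne = σ ⟨0, hk⟩ := List.head_ofFn hne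
  constructor
  · intro h
    obtain ⟨t, ht⟩ := h
    have : (List.ofFn σ).head hne = b := by
      simp only [← ht]
      rfl
    rw [hhead] at this
    simp [bitE, hk, this]
  · intro h
    refine ⟨(List.ofFn σ).tail, ?_⟩
    have hb : σ ⟨0, hk⟩ = b := by simpa [bitE, hk] using h
    rw [← hb, ← hhead]
    simp [List.cons_head_tail]
end Bisp
section InitLemmas

variable {k : ℕ}

lemma ne_of_bitE {u v : Fin k → Bool} {m : ℕ} (h : bitE u m ≠ bitE v m) : u ≠ v := by
  rintro rfl; exact h rfl

lemma bitE_one_lt {u : Fin k → Bool} (h : bitE u 1 = true) : 1 < k := by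
  by_contra hc
  rw [bitE_of_ge (by omega)] at h
  exact Bool.false_ne_true h

/-- Two non-tip states with the same first bit lie in one block of the updated
initial partition. -/
lemma init_same {u v : Fin k → Bool} (h0 : bitE u 0 = bitE v 0)
    (hu : bitE u 1 = true) (hv : bitE v 1 = true) :
    inSameBlock (bisplitter' k).init u v := by
  have hk1 : 1 < k := bitE_one_lt hu
  have hk0 : 0 < k := by omega
  have huz : u ≠ zeroState k := ne_of_bitE (by rw [hu, bitE_zeroState]; simp)
  have hvz : v ≠ zeroState k := ne_of_bitE (by rw [hv, bitE_zeroState]; simp)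
  have huo : u ≠ oneState k := ne_of_bitE (m := 1) (by rw [hu, bitE_oneState]; simp)
  have hvo : v ≠ oneState k := ne_of_bitE (m := 1) (by rw [hv, bitE_oneState]; simp)
  cases hb : bitE u 0 with
  | false =>
      refine ⟨prefixBlock k [false] \ {zeroState k}, ?_, ?_, ?_⟩
      · simp [bisplitter']
      · rw [Finset.mem_sdiff, mem_prefixBlock_iff hk0]
        exact ⟨hb, by simpa using huz⟩
      · rw [Finset.mem_sdiff, mem_prefixBlock_iff hk0]
        exact ⟨h0 ▸ hb, by simpa using hvz⟩
  | true =>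
      refine ⟨prefixBlock k [true] \ {oneState k}, ?_, ?_, ?_⟩
      · simp [bisplitter']
      · rw [Finset.mem_sdiff, mem_prefixBlock_iff hk0]
        exact ⟨hb, by simpa using huo⟩
      · rw [Finset.mem_sdiff, mem_prefixBlock_iff hk0]
        exact ⟨h0 ▸ hb, by simpa using hvo⟩

lemma bitE_jump {u : Fin k → Bool} {j : Fin (k - 1)} (hb : bitE u (j.val + 1) = true)
    (m : ℕ) : bitE (bsStep u j) m =
      if m < j.val then bitE u m else if m = j.val then !(bitE u m) else false := by
  rw [bitE_bsStep, if_neg (by simp [hb])]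

lemma diffAt_jump {u : Fin k → Bool} {j : Fin (k - 1)} (hb : bitE u (j.val + 1) = true) :
    DiffAt (bsStep u j) u j.val := by
  constructor
  · intro m hm
    rw [bitE_jump hb, if_pos hm]
  · rw [bitE_jump hb, if_neg (lt_irrefl _), if_pos rfl]
    simp

/-- The key invariant: inside the region (bits 1 and 2 set of the "center" `y`),
if a strictly shallower partner `x'` (at level `ℓ' ≥ 3`) is still with `y`,
then any deeper partner `x` is still with `y` and the pair `(x, y)` is not
splittable. -/
def SplInv (π : Finset (Finset (Fin k → Bool))) : Prop :=
  ∀ y x x' : Fin k → Bool, ∀ ℓ ℓ' : ℕ,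
    bitE y 1 = true → bitE y 2 = true →
    DiffAt x y ℓ → DiffAt x' y ℓ' → 3 ≤ ℓ' → ℓ' < ℓ →
    inSameBlock π x' y →
    inSameBlock π x y ∧ ∀ j : Fin (k - 1), inSameBlock π (bsStep x j) (bsStep y j)

/-- The invariant holds initially. -/
lemma inv_init (hpart : IsBlockPartition (bisplitter' k).init) :
    SplInv (bisplitter' k).init := by
  intro y x x' ℓ ℓ' hy1 hy2 hdx hdx' h3 hlt _
  have hℓ4 : 4 ≤ ℓ := by omega
  have hx0 : bitE x 0 = bitE y 0 := hdx.1 0 (by omega)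
  have hx1 : bitE x 1 = true := by rw [hdx.1 1 (by omega)]; exact hy1
  have hxy : inSameBlock (bisplitter' k).init x y := init_same hx0 hx1 hy1
  refine ⟨hxy, ?_⟩
  intro j
  by_cases hjl : j.val + 1 < ℓ
  · have hb : bitE x (j.val + 1) = bitE y (j.val + 1) := hdx.1 _ hjl
    cases hbv : bitE y (j.val + 1) with
    | false =>
        rw [bsStep_self (hb.trans hbv), bsStep_self hbv]
        exact hxy
    | true =>
        rw [bsStep_eq_of_agree (hb.trans hbv) hbv (fun m hm => hdx.1 m (by omega))]
        exact inSameBlock_refl hpart _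
  · -- j.val ≥ ℓ - 1 ≥ 3 : both successors stay in the region with the same first bit
    have hj3 : 3 ≤ j.val := by omega
    have key : ∀ u : Fin k → Bool, bitE u 0 = bitE y 0 → bitE u 1 = true →
        bitE (bsStep u j) 0 = bitE y 0 ∧ bitE (bsStep u j) 1 = true := by
      intro u h0 h1
      cases hbu : bitE u (j.val + 1) with
      | false => rw [bsStep_self hbu]; exact ⟨h0, h1⟩
      | true =>
          rw [bitE_jump hbu, bitE_jump hbu]
          rw [if_pos (by omega), if_pos (by omega)]
          exact ⟨h0, h1⟩
    obtain ⟨ha0, ha1⟩ := key x hx0 hx1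
    obtain ⟨hb0, hb1⟩ := key y rfl hy1
    exact init_same (ha0.trans hb0.symm) ha1 hb1

end InitLemmas
section Preserve

variable {k : ℕ}

lemma bool_flip_eq {a b : Bool} (h : ¬ a = b) : (!a) = b := by
  cases a <;> cases b <;> simp_all

/-- The invariant is preserved by valid refinement steps. -/
lemma inv_preserve {π π' : Finset (Finset (Fin k → Bool))}
    (hπ' : IsBlockPartition π')
    (hv : ValidRefinement (bisplitter' k) π π') (hI : SplInv π) : SplInv π' := by
  -- first conjunct, for all triples
  have first : ∀ y x x' : Fin k → Bool, ∀ ℓ ℓ' : ℕ,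
      bitE y 1 = true → bitE y 2 = true →
      DiffAt x y ℓ → DiffAt x' y ℓ' → 3 ≤ ℓ' → ℓ' < ℓ →
      inSameBlock π' x' y → inSameBlock π' x y := by
    intro y x x' ℓ ℓ' hy1 hy2 hdx hdx' h3 hlt hx'y
    have hx'yπ : inSameBlock π x' y := refines_sameBlock hv.1 hx'y
    obtain ⟨hxy, hns⟩ := hI y x x' ℓ ℓ' hy1 hy2 hdx hdx' h3 hlt hx'yπ
    exact stay_together hv hxy (by rintro ⟨a, ha⟩; exact ha (hns a))
  intro y x x' ℓ ℓ' hy1 hy2 hdx hdx' h3 hlt hx'y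
  have hxy' : inSameBlock π' x y := first y x x' ℓ ℓ' hy1 hy2 hdx hdx' h3 hlt hx'y
  refine ⟨hxy', ?_⟩
  have hx'1 : bitE x' 1 = true := by rw [hdx'.1 1 (by omega)]; exact hy1
  have hx'2 : bitE x' 2 = true := by rw [hdx'.1 2 (by omega)]; exact hy2
  -- any state differing from `y` first at a level `> ℓ'` is still with `y`
  have deepSame : ∀ v : Fin k → Bool, ∀ m : ℕ, DiffAt v y m → ℓ' < m →
      inSameBlock π' v y := by
    intro v m hd hm
    exact first y v x' m ℓ' hy1 hy2 hd hdx' h3 hm hx'y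
  -- any state agreeing with `y` below `ℓ'` and with `x'` at `ℓ'` is still with `y`
  have deepSame' : ∀ v : Fin k → Bool, (∀ m, m < ℓ' → bitE v m = bitE y m) →
      bitE v ℓ' = bitE x' ℓ' → inSameBlock π' v y := by
    intro v hlow hat
    by_cases hvx' : v = x'
    · subst hvx'; exact hx'y
    · have hagree : ∀ m, m ≤ ℓ' → bitE v m = bitE x' m := by
        intro m hm
        rcases Nat.lt_or_ge m ℓ' with h | h
        · rw [hlow m h, hdx'.1 m h]
        · have : m = ℓ' := by omega
          rw [this]; exact hat
      obtain ⟨m, hm, hmgt⟩ := exists_diffAt_gt hagree hvx'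
      have hvx : inSameBlock π' v x' :=
        first x' v y m ℓ' hx'1 hx'2 hm hdx'.symm h3 hmgt hx'y.symm'
      exact sameBlock_trans hπ' hvx hx'y
  -- a state agreeing with `y` up to and including `ℓ` is still with `y`
  have deepSame2 : ∀ v : Fin k → Bool, (∀ m, m ≤ ℓ → bitE v m = bitE y m) →
      inSameBlock π' v y := by
    intro v hag
    by_cases hvy : v = y
    · subst hvy; exact inSameBlock_refl hπ' _
    · obtain ⟨m, hm, hmgt⟩ := exists_diffAt_gt hag hvy
      exact deepSame v m hm (by omega)
  intro j
  by_cases hb : bitE x (j.val + 1) = bitE y (j.val + 1)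
  · by_cases hbf : bitE y (j.val + 1) = false
    · rw [bsStep_self (hb.trans hbf), bsStep_self hbf]
      exact hxy'
    · have hby : bitE y (j.val + 1) = true := by simpa using hbf
      have hbx : bitE x (j.val + 1) = true := hb.trans hby
      by_cases hjl : j.val + 1 < ℓ
      · rw [bsStep_eq_of_agree hbx hby (fun m hm => hdx.1 m (by omega))]
        exact inSameBlock_refl hπ' _
      · -- j.val ≥ ℓ  (j.val + 1 = ℓ impossible since bits agree at j.val+1)
        have hjge : ℓ ≤ j.val := by
          rcases Nat.lt_or_ge j.val ℓ with h | h
          · exfalso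
            have : j.val + 1 = ℓ := by omega
            exact hdx.2 (this ▸ hb)
          · exact h
        have hJy : inSameBlock π' (bsStep y j) y :=
          deepSame _ j.val (diffAt_jump hby) (by omega)
        have hJx : inSameBlock π' (bsStep x j) y := by
          rcases Nat.lt_or_ge ℓ j.val with hgt | hge
          · refine deepSame _ ℓ ⟨?_, ?_⟩ (by omega)
            · intro m hm
              rw [bitE_jump hbx, if_pos (by omega), hdx.1 m hm]
            · rw [bitE_jump hbx, if_pos hgt]; exact hdx.2
          · have hje : j.val = ℓ := by omega
            refine deepSame2 _ ?_
            intro m hm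
            rcases Nat.lt_or_ge m ℓ with h | h
            · rw [bitE_jump hbx, if_pos (by omega), hdx.1 m h]
            · have : m = ℓ := by omega
              subst this
              rw [bitE_jump hbx, if_neg (by omega), if_pos (by omega)]
              exact bool_flip_eq hdx.2
        exact sameBlock_trans' hπ' hJx hJy
  · -- bits at j.val+1 differ, hence j.val + 1 ≥ ℓ
    have hjge : ℓ ≤ j.val + 1 := by
      by_contra hc
      exact hb (hdx.1 _ (by omega))
    -- `bsStep x j ∼ y`
    have hsx : inSameBlock π' (bsStep x j) y := by
      cases hbx : bitE x (j.val + 1) with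
      | false => rw [bsStep_self hbx]; exact hxy'
      | true =>
          rcases Nat.lt_or_ge ℓ j.val with hgt | hge
          · refine deepSame _ ℓ ⟨?_, ?_⟩ (by omega)
            · intro m hm
              rw [bitE_jump hbx, if_pos (by omega), hdx.1 m hm]
            · rw [bitE_jump hbx, if_pos hgt]; exact hdx.2
          · rcases Nat.eq_or_lt_of_le hge with hje | hlt2
            · -- j.val = ℓ
              refine deepSame2 _ ?_
              intro m hm
              rcases Nat.lt_or_ge m ℓ with h | h
              · rw [bitE_jump hbx, if_pos (by omega), hdx.1 m h]
              · have : m = ℓ := by omega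
                subst this
                rw [bitE_jump hbx, if_neg (by omega), if_pos (by omega)]
                exact bool_flip_eq hdx.2
            · -- j.val = ℓ - 1
              have hje : j.val = ℓ - 1 := by omega
              have hdJ : DiffAt (bsStep x j) y (ℓ - 1) := by
                constructor
                · intro m hm
                  rw [bitE_jump hbx, if_pos (by omega), hdx.1 m (by omega)]
                · rw [bitE_jump hbx, if_neg (by omega), if_pos (by omega)]
                  rw [hdx.1 (ℓ - 1) (by omega)]
                  simp
              rcases Nat.lt_or_ge ℓ' (ℓ - 1) with h | h
              · exact deepSame _ (ℓ - 1) hdJ h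
              · have hℓ'e : ℓ - 1 = ℓ' := by omega
                refine deepSame' _ ?_ ?_
                · intro m hm
                  rw [bitE_jump hbx, if_pos (by omega), hdx.1 m (by omega)]
                · rw [bitE_jump hbx, if_neg (by omega), if_pos (by omega)]
                  rw [hdx.1 ℓ' (by omega)]
                  exact bool_flip_eq fun e => hdx'.2 e.symm
    -- `bsStep y j ∼ y`
    have hsy : inSameBlock π' (bsStep y j) y := by
      cases hby : bitE y (j.val + 1) with
      | false => rw [bsStep_self hby]; exact inSameBlock_refl hπ' _
      | true =>
          have hdJ : DiffAt (bsStep y j) y j.val := diffAt_jump hby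
          rcases Nat.lt_or_ge ℓ' j.val with h | h
          · exact deepSame _ j.val hdJ h
          · have hje : j.val = ℓ' := by omega
            refine deepSame' _ ?_ ?_
            · intro m hm
              rw [bitE_jump hby, if_pos (by omega)]
            · rw [bitE_jump hby, if_neg (by omega), if_pos (by omega)]
              exact bool_flip_eq fun e => hdx'.2 e.symm
    exact sameBlock_trans' hπ' hsx hsy

end Preserve
section SeqFacts

variable {k : ℕ}

lemma refinesPart_refl {S : Type} (π : Finset (Finset S)) : RefinesPart π π :=
  fun B hB => ⟨B, hB, le_refl _⟩

lemma refinesPart_trans {S : Type} {π₁ π₂ π₃ : Finset (Finset S)}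
    (h12 : RefinesPart π₁ π₂) (h23 : RefinesPart π₂ π₃) : RefinesPart π₁ π₃ := by
  intro B hB
  obtain ⟨C, hC, hBC⟩ := h12 B hB
  obtain ⟨D, hD, hCD⟩ := h23 C hC
  exact ⟨D, hD, hBC.trans hCD⟩

variable {n : ℕ} {seq : ℕ → Finset (Finset (Fin k → Bool))}
  (hseq : ValidRefinementSeq (bisplitter' k) n seq)

include hseq

lemma seq_refines : ∀ i, i ≤ n → RefinesPart (seq i) (seq 0) := by
  intro i
  induction i with
  | zero => exact fun _ => refinesPart_refl _
  | succ m ih =>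
      intro hm
      exact refinesPart_trans (hseq.2.2.1 m (by omega)).1 (ih (by omega))

lemma inv_seq : ∀ i, i ≤ n → SplInv (seq i) := by
  intro i
  induction i with
  | zero =>
      intro _
      have h0 : seq 0 = (bisplitter' k).init := hseq.1
      rw [h0]
      exact inv_init (h0 ▸ hseq.2.1 0 (by omega))
  | succ m ih =>
      intro hm
      exact inv_preserve (hseq.2.1 (m+1) hm) (hseq.2.2.1 m (by omega)) (ih (by omega))

omit hseq

/-- In a stable partition, blocks are closed under taking simultaneous successors. -/
lemma stable_step {π : Finset (Finset (Fin k → Bool))}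
    (hst : IsStablePartition (bisplitter' k) π) (hπ : IsBlockPartition π)
    {x y : Fin k → Bool} (h : inSameBlock π x y) (a : Fin (k - 1)) :
    inSameBlock π (bsStep x a) (bsStep y a) := by
  obtain ⟨B, hB, hx, hy⟩ := h
  obtain ⟨C, hC, hxC⟩ := hπ.2.2 (bsStep x a)
  rcases hst B hB C hC a with hall | hnone
  · obtain ⟨t', ht', htr⟩ := hall y hy
    rw [bisp_tr_iff] at htr
    exact ⟨C, hC, hxC, htr ▸ ht'⟩
  · exact absurd ⟨bsStep x a, hxC, rfl⟩ (hnone x hx)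

/-- Any stable partition refining the updated initial partition is discrete. -/
lemma stable_discrete {π : Finset (Finset (Fin k → Bool))}
    (hst : IsStablePartition (bisplitter' k) π) (hπ : IsBlockPartition π)
    (href : RefinesPart π (bisplitter' k).init) :
    ∀ x y : Fin k → Bool, x ≠ y → ¬ inSameBlock π x y := by
  suffices h : ∀ d : ℕ, ∀ x y : Fin k → Bool, DiffAt x y d → ¬ inSameBlock π x y by
    intro x y hne hsame
    obtain ⟨d, hd⟩ := exists_diffAt hne
    exact h d x y hd hsame
  intro d
  induction d with
  | zero =>
      intro x y hd hsame
      -- blocks of the initial partition have a constant first bit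
      have h0 : inSameBlock (bisplitter' k).init x y := refines_sameBlock href hsame
      obtain ⟨B, hB, hx, hy⟩ := h0
      have : bitE x 0 = bitE y 0 := by
        have hk0 : 0 < k := by
          have := hd.lt_k; omega
        simp only [bisplitter', Finset.mem_insert, Finset.mem_singleton] at hB
        rcases hB with rfl | rfl | rfl | rfl
        · rw [Finset.mem_singleton] at hx hy; rw [hx, hy]
        · rw [Finset.mem_sdiff, mem_prefixBlock_iff hk0] at hx hy
          rw [hx.1, hy.1]
        · rw [Finset.mem_singleton] at hx hy; rw [hx, hy]
        · rw [Finset.mem_sdiff, mem_prefixBlock_iff hk0] at hx hy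
          rw [hx.1, hy.1]
      exact hd.2 this
  | succ d ih =>
      intro x y hd hsame
      have hdk : d + 1 < k := hd.lt_k
      have hdk1 : d < k - 1 := by omega
      set j : Fin (k - 1) := ⟨d, hdk1⟩ with hj
      have hjv : j.val = d := rfl
      have hnext : inSameBlock π (bsStep x j) (bsStep y j) := stable_step hst hπ hsame j
      have hbne : bitE x (d + 1) ≠ bitE y (d + 1) := hd.2
      -- one of the two jumps, the other stays; the new pair differs first at `d`
      cases hbx : bitE x (d + 1) with
      | false =>
        have hby : bitE y (d + 1) = true := by
          cases hb2 : bitE y (d + 1)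
          · exact absurd (hbx.trans hb2.symm) (fun e => hbne (hbx.trans hb2.symm))
          · rfl
        rw [bsStep_self (σ := x) (hjv ▸ hbx)] at hnext
        refine ih x (bsStep y j) ⟨?_, ?_⟩ hnext
        · intro m hm
          rw [bitE_jump (hjv ▸ hby), if_pos (by omega), hd.1 m (by omega)]
        · rw [bitE_jump (hjv ▸ hby), if_neg (by omega), if_pos (by omega)]
          rw [hd.1 d (by omega)]
          simp
      | true =>
        have hby : bitE y (d + 1) = false := by
          cases hb2 : bitE y (d + 1)
          · rfl
          · exact absurd (hbx.trans hb2.symm) (fun e => hbne (hbx.trans hb2.symm))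
        rw [bsStep_self (σ := y) (hjv ▸ hby)] at hnext
        refine ih (bsStep x j) y ⟨?_, ?_⟩ hnext
        · intro m hm
          rw [bitE_jump (hjv ▸ hbx), if_pos (by omega), hd.1 m (by omega)]
        · rw [bitE_jump (hjv ▸ hbx), if_neg (by omega), if_pos (by omega)]
          rw [hd.1 d (by omega)]
          simp
    end SeqFacts
section Emb

variable {k : ℕ}

lemma bitE_eq {u : Fin k → Bool} {m : ℕ} (h : m < k) : bitE u m = u ⟨m, h⟩ :=
  dif_pos h

/-- Flip bit `ℓ`. -/
def flipAt (ℓ : ℕ) (v : Fin k → Bool) : Fin k → Bool :=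
  fun p => if p.val = ℓ then !(v p) else v p

lemma bitE_flipAt {ℓ : ℕ} (hℓ : ℓ < k) (v : Fin k → Bool) (m : ℕ) :
    bitE (flipAt ℓ v) m = if m = ℓ then !(bitE v m) else bitE v m := by
  by_cases hm : m < k
  · rw [bitE_eq hm, bitE_eq hm]
    simp only [flipAt]
  · rw [bitE_of_ge (by omega), bitE_of_ge (by omega)]
    rw [if_neg (by omega)]

lemma flipAt_flipAt {ℓ : ℕ} (v : Fin k → Bool) : flipAt ℓ (flipAt ℓ v) = v := by
  funext p
  simp only [flipAt]
  by_cases h : p.val = ℓ <;> simp [h]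

lemma diffAt_flipAt {ℓ : ℕ} (hℓ : ℓ < k) (v : Fin k → Bool) :
    DiffAt v (flipAt ℓ v) ℓ := by
  constructor
  · intro m hm
    rw [bitE_flipAt hℓ, if_neg (by omega)]
  · rw [bitE_flipAt hℓ, if_pos rfl]
    simp

/-- Position of the `m`-th free coordinate (avoiding `1`, `2`, `ℓ`). -/
def posOf (ℓ m : ℕ) : ℕ :=
  if m = 0 then 0 else if m + 2 < ℓ then m + 2 else m + 3

/-- Inverse rank of a position. -/
def rankOf (ℓ p : ℕ) : ℕ :=
  if p = 0 then 0 else if p < ℓ then p - 2 else p - 3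

/-- The embedding of `2^(k-3)` states with bits 1, 2 true and bit ℓ false. -/
def embG (ℓ : ℕ) (g : Fin (k - 3) → Bool) : Fin k → Bool :=
  fun p =>
    if p.val = 1 ∨ p.val = 2 then true
    else if p.val = ℓ then false
    else if h : rankOf ℓ p.val < k - 3 then g ⟨rankOf ℓ p.val, h⟩ else false

variable {ℓ : ℕ} (hk : 3 < k) (hℓ3 : 3 ≤ ℓ) (hℓk : ℓ < k)

include hk hℓ3 hℓk

lemma bitE_embG (g : Fin (k - 3) → Bool) (p : ℕ) (hp : p < k) :
    bitE (embG ℓ g) p =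
      if p = 1 ∨ p = 2 then true
      else if p = ℓ then false
      else if h : rankOf ℓ p < k - 3 then g ⟨rankOf ℓ p, h⟩ else false := by
  rw [bitE_eq hp]
  rfl

lemma embG_bits12 (g : Fin (k - 3) → Bool) :
    bitE (embG ℓ g) 1 = true ∧ bitE (embG ℓ g) 2 = true ∧ bitE (embG ℓ g) ℓ = false := by
  refine ⟨?_, ?_, ?_⟩
  · rw [bitE_embG hk hℓ3 hℓk g 1 (by omega), if_pos (by omega)]
  · rw [bitE_embG hk hℓ3 hℓk g 2 (by omega), if_pos (by omega)]
  · rw [bitE_embG hk hℓ3 hℓk g ℓ hℓk, if_neg (by omega), if_pos rfl]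

lemma rankOf_posOf (m : ℕ) (hm : m < k - 3) : rankOf ℓ (posOf ℓ m) = m := by
  unfold rankOf posOf
  repeat' split
  all_goals omega

lemma embG_apply_posOf (g : Fin (k - 3) → Bool) (m : Fin (k - 3)) :
    bitE (embG ℓ g) (posOf ℓ m.val) = g m := by
  have hm : m.val < k - 3 := m.isLt
  have hpos : posOf ℓ m.val < k := by
    unfold posOf
    split
    · omega
    · split <;> omega
  have hne12 : ¬ (posOf ℓ m.val = 1 ∨ posOf ℓ m.val = 2) := by
    unfold posOf
    split
    · omega
    · split <;> omega
  have hneℓ : ¬ posOf ℓ m.val = ℓ := by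
    unfold posOf
    split
    · omega
    · split <;> omega
  rw [bitE_embG hk hℓ3 hℓk g _ hpos, if_neg hne12, if_neg hneℓ]
  have hr := rankOf_posOf hk hℓ3 hℓk m.val hm
  have h2 : rankOf ℓ (posOf ℓ m.val) < k - 3 := by rw [hr]; exact hm
  rw [dif_pos h2]
  congr 1
  exact Fin.ext (by simp [hr])

lemma embG_inj : Function.Injective (embG (k := k) ℓ) := by
  intro g g' hgg
  funext m
  have := embG_apply_posOf hk hℓ3 hℓk g m
  rw [hgg] at this
  rw [← this, embG_apply_posOf hk hℓ3 hℓk g' m]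

end Emb
section Main

theorem lower_bound_any_seq {k : ℕ} (hk : 3 < k) {n : ℕ}
    {seq : ℕ → Finset (Finset (Fin k → Bool))}
    (hseq : ValidRefinementSeq (bisplitter' k) n seq) :
    (k - 3) * 2 ^ (k - 3) ≤ IRCseq n seq := by
  classical
  have hpart := hseq.2.1
  have hvalid := hseq.2.2.1
  have hstable := hseq.2.2.2
  have hinv := inv_seq hseq
  -- choose a maximum-cardinality child of every block
  have hMex : ∀ i B, ∃ Mv : Finset (Fin k → Bool), i < n → B ∈ seq i →
      Mv ∈ seq (i+1) ∧ Mv ⊆ B ∧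
        Mv.card = ((seq (i+1)).filter (fun B' => B' ⊆ B)).sup Finset.card := by
    intro i B
    by_cases h : i < n ∧ B ∈ seq i
    · obtain ⟨hi, hB⟩ := h
      have hBne : B.Nonempty := Finset.nonempty_iff_ne_empty.2
        (fun he => (hpart i (le_of_lt hi)).1 (he ▸ hB))
      obtain ⟨z, hz⟩ := hBne
      obtain ⟨C, hC, hzC⟩ := (hpart (i+1) (by omega)).2.2 z
      have hCB : C ⊆ B := by
        obtain ⟨B₂, hB₂, hsub⟩ := (hvalid i hi).1 C hC
        have hBeq : B₂ = B := by
          by_contra hne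
          exact (Finset.disjoint_left.1 ((hpart i (le_of_lt hi)).2.1 _ hB₂ _ hB hne))
            (hsub hzC) hz
        exact hBeq ▸ hsub
      have hne : ((seq (i+1)).filter (fun B' => B' ⊆ B)).Nonempty :=
        ⟨C, Finset.mem_filter.2 ⟨hC, hCB⟩⟩
      obtain ⟨Mv, hMv, hMvcard⟩ := Finset.exists_mem_eq_sup _ hne Finset.card
      rw [Finset.mem_filter] at hMv
      exact ⟨Mv, fun _ _ => ⟨hMv.1, hMv.2, hMvcard.symm⟩⟩
    · exact ⟨∅, fun hi hB => absurd ⟨hi, hB⟩ h⟩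
  choose M hM using hMex
  -- the states moved at step i
  set moved : ℕ → Finset (Fin k → Bool) :=
    fun i => Finset.univ.filter (fun z => ∃ B ∈ seq i, z ∈ B ∧ z ∉ M i B) with hmoved
  have hcost : ∀ i, i < n → (moved i).card ≤ IRCstep (seq i) (seq (i+1)) := by
    intro i hi
    have hsub : moved i ⊆ (seq i).biUnion (fun B => B \ M i B) := by
      intro z hz
      rw [hmoved, Finset.mem_filter] at hz
      obtain ⟨_, B, hB, hzB, hzM⟩ := hz
      exact Finset.mem_biUnion.2 ⟨B, hB, Finset.mem_sdiff.2 ⟨hzB, hzM⟩⟩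
    calc (moved i).card ≤ ((seq i).biUnion (fun B => B \ M i B)).card :=
          Finset.card_le_card hsub
      _ ≤ ∑ B ∈ seq i, (B \ M i B).card := Finset.card_biUnion_le
      _ ≤ ∑ B ∈ seq i, (B.card - ((seq (i+1)).filter (fun B' => B' ⊆ B)).sup Finset.card) := by
          apply Finset.sum_le_sum
          intro B hB
          rw [Finset.card_sdiff_of_subset ((hM i B hi hB).2.1), (hM i B hi hB).2.2]
      _ = IRCstep (seq i) (seq (i+1)) := rfl
  -- a state can only be separated at one region-level in one step
  have hOne : ∀ i, i < n → ∀ z w1 w2 : Fin k → Bool, ∀ ℓ1 ℓ2 : ℕ,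
      bitE z 1 = true → bitE z 2 = true → 3 ≤ ℓ1 → ℓ1 < ℓ2 →
      DiffAt z w1 ℓ1 → DiffAt z w2 ℓ2 →
      inSameBlock (seq i) z w1 → inSameBlock (seq i) z w2 →
      ¬ inSameBlock (seq (i+1)) z w2 → False := by
    intro i hi z w1 w2 ℓ1 ℓ2 hz1 hz2 h3 hlt hd1 hd2 hs1 hs2 hsep
    have hspl : Splittable (seq i) z w2 := sep_splittable (hvalid i hi) hs2 hsep
    obtain ⟨_, hns⟩ := (hinv i (le_of_lt hi)) z w2 w1 ℓ2 ℓ1 hz1 hz2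
      hd2.symm hd1.symm h3 hlt hs1.symm'
    obtain ⟨a, ha⟩ := hspl
    exact ha (hns a).symm'
  -- the "mover at level ℓ" predicate
  set pred : ℕ → (Fin k → Bool) → Prop := fun ℓ z =>
    ∃ i, i < n ∧ (∃ w, DiffAt z w ℓ ∧ inSameBlock (seq i) z w ∧
      ¬ inSameBlock (seq (i+1)) z w) ∧ ∃ B ∈ seq i, z ∈ B ∧ z ∉ M i B with hpred
  set V : ℕ → Finset (Fin k → Bool) :=
    fun ℓ => Finset.univ.filter (fun z => bitE z 1 = true ∧ bitE z 2 = true ∧ pred ℓ z) with hV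
  -- every level between 3 and k-1 has at least 2^(k-3) movers
  have hVcard : ∀ ℓ, 3 ≤ ℓ → ℓ ≤ k - 1 → 2 ^ (k - 3) ≤ (V ℓ).card := by
    intro ℓ h3 hlk'
    have hℓk : ℓ < k := by omega
    have hpair : ∀ g : Fin (k - 3) → Bool,
        embG ℓ g ∈ V ℓ ∨ flipAt ℓ (embG ℓ g) ∈ V ℓ := by
      intro g
      obtain ⟨hz1, hz2, hzℓ⟩ := embG_bits12 hk h3 hℓk g
      set z := embG ℓ g with hzdef
      set w := flipAt ℓ z with hwdef
      have hw1 : bitE w 1 = true := by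
        rw [hwdef, bitE_flipAt hℓk, if_neg (by omega)]; exact hz1
      have hw2 : bitE w 2 = true := by
        rw [hwdef, bitE_flipAt hℓk, if_neg (by omega)]; exact hz2
      have hw0 : bitE z 0 = bitE w 0 := by
        rw [hwdef, bitE_flipAt hℓk, if_neg (by omega)]
      have hd : DiffAt z w ℓ := diffAt_flipAt hℓk z
      have hs0 : inSameBlock (seq 0) z w := by
        rw [hseq.1]
        exact init_same hw0 hz1 hw1
      have hsn : ¬ inSameBlock (seq n) z w := by
        apply stable_discrete hstable (hpart n le_rfl) ?_ z w hd.ne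
        rw [← hseq.1]
        exact seq_refines hseq n le_rfl
      have hfind : ∃ j, j < n ∧ inSameBlock (seq j) z w ∧ ¬ inSameBlock (seq (j+1)) z w := by
        by_contra hc
        push_neg at hc
        have hall : ∀ m, m ≤ n → inSameBlock (seq m) z w := by
          intro m
          induction m with
          | zero => exact fun _ => hs0
          | succ j ih =>
              intro hm
              exact hc j (by omega) (ih (by omega))
        exact hsn (hall n le_rfl)
      obtain ⟨j, hjn, hsj, hsepj⟩ := hfind
      obtain ⟨B, hB, hzB, hwB⟩ := hsj
      have hMb := hM j B hjn hB
      have hone : z ∉ M j B ∨ w ∉ M j B := by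
        by_contra hc
        push_neg at hc
        exact hsepj ⟨M j B, hMb.1, hc.1, hc.2⟩
      have hsjB : inSameBlock (seq j) z w := ⟨B, hB, hzB, hwB⟩
      rcases hone with hzM | hwM
      · left
        rw [hV]
        exact Finset.mem_filter.2 ⟨Finset.mem_univ _, hz1, hz2,
          j, hjn, ⟨w, hd, hsjB, hsepj⟩, B, hB, hzB, hzM⟩
      · right
        rw [hV]
        exact Finset.mem_filter.2 ⟨Finset.mem_univ _, hw1, hw2,
          j, hjn, ⟨z, hd.symm, hsjB.symm', fun hc => hsepj hc.symm'⟩, B, hB, hwB, hwM⟩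
    have hmaps : ∀ g ∈ (Finset.univ : Finset (Fin (k - 3) → Bool)),
        (if embG ℓ g ∈ V ℓ then embG ℓ g else flipAt ℓ (embG ℓ g)) ∈ V ℓ := by
      intro g _
      split_ifs with h
      · exact h
      · rcases hpair g with h' | h'
        · exact absurd h' h
        · exact h'
    have hinj : Set.InjOn (fun g => if embG ℓ g ∈ V ℓ then embG ℓ g else flipAt ℓ (embG ℓ g))
        (Finset.univ : Finset (Fin (k - 3) → Bool)) := by
      intro g _ g' _ he
      simp only at he
      have hbg : bitE (embG ℓ g) ℓ = false := (embG_bits12 hk h3 hℓk g).2.2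
      have hbg' : bitE (embG ℓ g') ℓ = false := (embG_bits12 hk h3 hℓk g').2.2
      have hfg : bitE (flipAt ℓ (embG ℓ g)) ℓ = true := by
        rw [bitE_flipAt hℓk, if_pos rfl, hbg]; rfl
      have hfg' : bitE (flipAt ℓ (embG ℓ g')) ℓ = true := by
        rw [bitE_flipAt hℓk, if_pos rfl, hbg']; rfl
      apply embG_inj hk h3 hℓk
      by_cases h1 : embG ℓ g ∈ V ℓ <;> by_cases h2 : embG ℓ g' ∈ V ℓ
      · rwa [if_pos h1, if_pos h2] at he
      · rw [if_pos h1, if_neg h2] at he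
        exact absurd (he ▸ hbg) (by rw [hfg']; simp)
      · rw [if_neg h1, if_pos h2] at he
        exact absurd (he ▸ hfg) (by rw [hbg']; simp)
      · rw [if_neg h1, if_neg h2] at he
        have h5 : flipAt ℓ (flipAt ℓ (embG ℓ g)) = flipAt ℓ (flipAt ℓ (embG ℓ g')) := by rw [he]
        rwa [flipAt_flipAt, flipAt_flipAt] at h5
    have hle := Finset.card_le_card_of_injOn
      (fun g => if embG ℓ g ∈ V ℓ then embG ℓ g else flipAt ℓ (embG ℓ g)) hmaps hinj
    calc 2 ^ (k - 3) = (Finset.univ : Finset (Fin (k - 3) → Bool)).card := by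
          rw [Finset.card_univ]
          simp [Fintype.card_fun]
      _ ≤ (V ℓ).card := hle
  -- the set of (level, mover) pairs
  set P : Finset (ℕ × (Fin k → Bool)) :=
    (Finset.Icc 3 (k-1)).biUnion (fun ℓ => (V ℓ).image (fun z => (ℓ, z))) with hP
  have hPcard : (k - 3) * 2 ^ (k - 3) ≤ P.card := by
    rw [hP, Finset.card_biUnion]
    · have : ∀ ℓ ∈ Finset.Icc 3 (k-1), 2 ^ (k-3) ≤ ((V ℓ).image (fun z => (ℓ, z))).card := by
        intro ℓ hℓ
        rw [Finset.mem_Icc] at hℓ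
        rw [Finset.card_image_of_injective _ (fun a b hab => congrArg Prod.snd hab)]
        exact hVcard ℓ hℓ.1 hℓ.2
      calc (k - 3) * 2 ^ (k - 3) = ∑ _ℓ ∈ Finset.Icc 3 (k-1), 2 ^ (k - 3) := by
            have he' : k - 1 + 1 - 3 = k - 3 := by omega
            rw [Finset.sum_const, Nat.card_Icc, smul_eq_mul, he']
        _ ≤ ∑ ℓ ∈ Finset.Icc 3 (k-1), ((V ℓ).image (fun z => (ℓ, z))).card :=
            Finset.sum_le_sum this
    · intro a _ b _ hab
      rw [Function.onFun, Finset.disjoint_left]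
      rintro ⟨ℓz, z⟩ hmem hmem'
      rw [Finset.mem_image] at hmem hmem'
      obtain ⟨z1, _, h1⟩ := hmem
      obtain ⟨z2, _, h2⟩ := hmem'
      apply hab
      have e1 : a = ℓz := congrArg Prod.fst h1
      have e2 : b = ℓz := congrArg Prod.fst h2
      rw [e1, e2]
  -- inject P into the moved-pairs
  set F : ℕ × (Fin k → Bool) → ℕ × (Fin k → Bool) :=
    fun p => (if h : pred p.1 p.2 then Classical.choose h else 0, p.2) with hF
  set Q : Finset (ℕ × (Fin k → Bool)) :=
    (Finset.range n).biUnion (fun i => (moved i).image (fun z => (i, z))) with hQ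
  have hmemP : ∀ p ∈ P, (3 ≤ p.1 ∧ bitE p.2 1 = true ∧ bitE p.2 2 = true) ∧ pred p.1 p.2 := by
    intro p hp
    rw [hP, Finset.mem_biUnion] at hp
    obtain ⟨ℓ, hℓ, hp⟩ := hp
    rw [Finset.mem_image] at hp
    obtain ⟨z, hz, rfl⟩ := hp
    rw [Finset.mem_Icc] at hℓ
    rw [hV, Finset.mem_filter] at hz
    exact ⟨⟨hℓ.1, hz.2.1, hz.2.2.1⟩, hz.2.2.2⟩
  have hFmaps : ∀ p ∈ P, F p ∈ Q := by
    intro p hp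
    obtain ⟨_, hpr⟩ := hmemP p hp
    rw [hF]
    simp only [dif_pos hpr]
    obtain ⟨hin, _, hBex⟩ := Classical.choose_spec hpr
    rw [hQ, Finset.mem_biUnion]
    refine ⟨Classical.choose hpr, Finset.mem_range.2 hin, ?_⟩
    rw [Finset.mem_image]
    refine ⟨p.2, ?_, rfl⟩
    rw [hmoved, Finset.mem_filter]
    exact ⟨Finset.mem_univ _, hBex⟩
  have hspec : ∀ r, ∀ hr : pred r.1 r.2, (F r).1 < n ∧
      ∃ w, DiffAt r.2 w r.1 ∧ inSameBlock (seq (F r).1) r.2 w ∧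
        ¬ inSameBlock (seq ((F r).1 + 1)) r.2 w := by
    intro r hr
    rw [hF]
    simp only [dif_pos hr]
    obtain ⟨hin, hw, _⟩ := Classical.choose_spec hr
    exact ⟨hin, hw⟩
  have hFinj : Set.InjOn F P := by
    intro p hp q hq he
    obtain ⟨⟨h3p, hp1, hp2⟩, hppr⟩ := hmemP p hp
    obtain ⟨⟨h3q, hq1, hq2⟩, hqpr⟩ := hmemP q hq
    have hze : p.2 = q.2 := by
      have := congrArg Prod.snd he
      rw [hF] at this
      exact this
    have h1 := hspec p hppr
    have h2 := hspec q hqpr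
    rw [he] at h1
    rw [hze] at h1
    obtain ⟨hin, wp, hdp, hsp, hsepp⟩ := h1
    obtain ⟨_, wq, hdq, hsq, hsepq⟩ := h2
    have hℓeq : p.1 = q.1 := by
      rcases Nat.lt_trichotomy p.1 q.1 with hlt | heq | hgt
      · exact absurd (hOne (F q).1 hin q.2 wp wq p.1 q.1 hq1 hq2 h3p hlt
          hdp hdq hsp hsq hsepq) not_false
      · exact heq
      · exact absurd (hOne (F q).1 hin q.2 wq wp q.1 p.1 hq1 hq2 h3q hgt
          hdq hdp hsq hsp hsepp) not_false
    exact Prod.ext hℓeq hze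
  have hPQ : P.card ≤ Q.card := Finset.card_le_card_of_injOn F hFmaps hFinj
  have hQcard : Q.card ≤ ∑ i ∈ Finset.range n, (moved i).card := by
    rw [hQ]
    refine le_trans Finset.card_biUnion_le ?_
    exact Finset.sum_le_sum fun i _ => Finset.card_image_le
  calc (k - 3) * 2 ^ (k - 3) ≤ P.card := hPcard
    _ ≤ Q.card := hPQ
    _ ≤ ∑ i ∈ Finset.range n, (moved i).card := hQcard
    _ ≤ ∑ i ∈ Finset.range n, IRCstep (seq i) (seq (i+1)) :=
        Finset.sum_le_sum fun i hi => hcost i (Finset.mem_range.1 hi)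
    _ = IRCseq n seq := rfl

end Main
section Existence

open Classical

variable {k : ℕ}

/-- Block of the level-`i` partition: states agreeing with `σ` on bits `0..i`,
tips removed. -/
noncomputable def blkL (k i : ℕ) (σ : Fin k → Bool) : Finset (Fin k → Bool) :=
  Finset.filter
    (fun τ => (∀ m ∈ Finset.range (i+1), bitE τ m = bitE σ m) ∧
      τ ≠ zeroState k ∧ τ ≠ oneState k) Finset.univ

/-- The level-`i` partition with tips split off. -/
noncomputable def PpSeq (k : ℕ) (i : ℕ) : Finset (Finset (Fin k → Bool)) :=
  ((Finset.univ.image (fun σ => blkL k i σ)).filter (fun B => B.Nonempty)) ∪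
    {{zeroState k}, {oneState k}}

lemma mem_blkL {i : ℕ} {σ τ : Fin k → Bool} :
    τ ∈ blkL k i σ ↔
      (∀ m, m ≤ i → bitE τ m = bitE σ m) ∧ τ ≠ zeroState k ∧ τ ≠ oneState k := by
  simp only [blkL, Finset.mem_filter, Finset.mem_univ, true_and, Finset.mem_range,
    Nat.lt_succ_iff]

lemma blkL_eq_of_mem {i : ℕ} {σ τ : Fin k → Bool} (h : τ ∈ blkL k i σ) :
    blkL k i σ = blkL k i τ := by
  rw [mem_blkL] at h
  ext τ'
  rw [mem_blkL, mem_blkL]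
  constructor
  · rintro ⟨ha, h2⟩
    exact ⟨fun m hm => (ha m hm).trans (h.1 m hm).symm, h2⟩
  · rintro ⟨ha, h2⟩
    exact ⟨fun m hm => (ha m hm).trans (h.1 m hm), h2⟩

lemma mem_PpSeq_cases {i : ℕ} {B : Finset (Fin k → Bool)} (h : B ∈ PpSeq k i) :
    (∃ σ, B = blkL k i σ ∧ B.Nonempty) ∨ B = {zeroState k} ∨ B = {oneState k} := by
  unfold PpSeq at h
  rw [Finset.mem_union, Finset.mem_filter, Finset.mem_image] at h
  rcases h with ⟨⟨σ, _, rfl⟩, hne⟩ | h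
  · exact Or.inl ⟨σ, rfl, hne⟩
  · rw [Finset.mem_insert, Finset.mem_singleton] at h
    exact Or.inr h

lemma zeroState_ne_oneState (hk : 0 < k) : zeroState k ≠ oneState k := by
  apply ne_of_bitE (m := 0)
  rw [bitE_zeroState, bitE_oneState]
  simp [hk]

/-- Tips are not in the `blkL` blocks; singletons of tips are in `PpSeq`. -/
lemma tip_mem_PpSeq (i : ℕ) :
    ({zeroState k} : Finset (Fin k → Bool)) ∈ PpSeq k i ∧
      ({oneState k} : Finset (Fin k → Bool)) ∈ PpSeq k i := by
  constructor <;>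
    (unfold PpSeq; rw [Finset.mem_union]; right; simp)

lemma PpSeq_partition (hk : 3 < k) (i : ℕ) : IsBlockPartition (PpSeq k i) := by
  refine ⟨?_, ?_, ?_⟩
  · intro h
    rcases mem_PpSeq_cases h with ⟨σ, he, hne⟩ | h | h
    · exact Finset.not_nonempty_empty hne
    · exact Finset.singleton_ne_empty _ h.symm
    · exact Finset.singleton_ne_empty _ h.symm
  · intro B hB B' hB' hne
    rw [Finset.disjoint_left]
    intro τ hτ hτ'
    apply hne
    rcases mem_PpSeq_cases hB with ⟨σ, rfl, _⟩ | rfl | rfl <;>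
      rcases mem_PpSeq_cases hB' with ⟨σ', rfl, _⟩ | rfl | rfl
    · rw [blkL_eq_of_mem hτ, blkL_eq_of_mem hτ']
    · exact absurd (Finset.mem_singleton.1 hτ') (mem_blkL.1 hτ).2.1
    · exact absurd (Finset.mem_singleton.1 hτ') (mem_blkL.1 hτ).2.2
    · exact absurd (Finset.mem_singleton.1 hτ) (mem_blkL.1 hτ').2.1
    · rfl
    · exact absurd ((Finset.mem_singleton.1 hτ).symm.trans (Finset.mem_singleton.1 hτ'))
        (zeroState_ne_oneState (by omega))
    · exact absurd (Finset.mem_singleton.1 hτ) (mem_blkL.1 hτ').2.2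
    · exact absurd ((Finset.mem_singleton.1 hτ).symm.trans (Finset.mem_singleton.1 hτ'))
        (zeroState_ne_oneState (by omega)).symm
    · rfl
  · intro τ
    by_cases hz : τ = zeroState k
    · exact ⟨{zeroState k}, (tip_mem_PpSeq i).1, by simp [hz]⟩
    by_cases ho : τ = oneState k
    · exact ⟨{oneState k}, (tip_mem_PpSeq i).2, by simp [ho]⟩
    refine ⟨blkL k i τ, ?_, mem_blkL.2 ⟨fun m _ => rfl, hz, ho⟩⟩
    unfold PpSeq
    rw [Finset.mem_union]
    left
    rw [Finset.mem_filter, Finset.mem_image]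
    exact ⟨⟨τ, Finset.mem_univ _, rfl⟩, ⟨τ, mem_blkL.2 ⟨fun m _ => rfl, hz, ho⟩⟩⟩

/-- Two states differing at a position `≤ i` are in different `PpSeq k i` blocks. -/
lemma not_same_PpSeq {i m : ℕ} {u v : Fin k → Bool} (hm : m ≤ i)
    (hne : bitE u m ≠ bitE v m) : ¬ inSameBlock (PpSeq k i) u v := by
  rintro ⟨B, hB, hu, hv⟩
  rcases mem_PpSeq_cases hB with ⟨σ, rfl, _⟩ | rfl | rfl
  · exact hne (((mem_blkL.1 hu).1 m hm).trans ((mem_blkL.1 hv).1 m hm).symm)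
  · rw [Finset.mem_singleton] at hu hv
    exact hne (hu ▸ hv ▸ rfl)
  · rw [Finset.mem_singleton] at hu hv
    exact hne (hu ▸ hv ▸ rfl)

/-- Non-tip states agreeing up to `i` are in the same `PpSeq k i` block. -/
lemma same_PpSeq {i : ℕ} {u v : Fin k → Bool}
    (hag : ∀ m, m ≤ i → bitE u m = bitE v m)
    (huz : u ≠ zeroState k) (huo : u ≠ oneState k)
    (hvz : v ≠ zeroState k) (hvo : v ≠ oneState k) :
    inSameBlock (PpSeq k i) u v := by
  refine ⟨blkL k i v, ?_, mem_blkL.2 ⟨hag, huz, huo⟩, mem_blkL.2 ⟨fun m _ => rfl, hvz, hvo⟩⟩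
  unfold PpSeq
  rw [Finset.mem_union]
  left
  rw [Finset.mem_filter, Finset.mem_image]
  exact ⟨⟨v, Finset.mem_univ _, rfl⟩, ⟨v, mem_blkL.2 ⟨fun m _ => rfl, hvz, hvo⟩⟩⟩

end Existence
section Existence2

variable {k : ℕ}

/-- witness states -/
def wOne (k : ℕ) : Fin k → Bool := fun p => decide (p.val = 1)
def wTwo (k : ℕ) : Fin k → Bool := fun p => decide (p.val = 0 ∨ p.val = 1)

lemma bitE_wOne (m : ℕ) : bitE (wOne k) m = decide (m = 1 ∧ m < k) := by
  unfold bitE wOne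
  split <;> rename_i h <;> simp <;> omega

lemma bitE_wTwo (m : ℕ) : bitE (wTwo k) m = decide ((m = 0 ∨ m = 1) ∧ m < k) := by
  unfold bitE wTwo
  split <;> rename_i h <;> simp <;> omega

lemma wOne_props (hk : 3 < k) :
    bitE (wOne k) 0 = false ∧ wOne k ≠ zeroState k ∧ wOne k ≠ oneState k := by
  refine ⟨by rw [bitE_wOne]; simp, ?_, ?_⟩
  · exact ne_of_bitE (m := 1) (by rw [bitE_wOne, bitE_zeroState]; simp; omega)
  · exact ne_of_bitE (m := 1) (by rw [bitE_wOne, bitE_oneState]; simp; omega)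

lemma wTwo_props (hk : 3 < k) :
    bitE (wTwo k) 0 = true ∧ wTwo k ≠ zeroState k ∧ wTwo k ≠ oneState k := by
  refine ⟨by rw [bitE_wTwo]; simp; omega, ?_, ?_⟩
  · exact ne_of_bitE (m := 0) (by rw [bitE_wTwo, bitE_zeroState]; simp; omega)
  · exact ne_of_bitE (m := 1) (by rw [bitE_wTwo, bitE_oneState]; simp; omega)

lemma blkL_zero (hk : 3 < k) (σ : Fin k → Bool) :
    blkL k 0 σ = (if bitE σ 0 = false then prefixBlock k [false] \ {zeroState k}
      else prefixBlock k [true] \ {oneState k}) := by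
  have hk0 : 0 < k := by omega
  cases hb : bitE σ 0 with
  | false =>
      rw [if_pos rfl]
      ext τ
      rw [mem_blkL, Finset.mem_sdiff, mem_prefixBlock_iff hk0, Finset.mem_singleton]
      constructor
      · rintro ⟨hag, hz, _⟩
        exact ⟨(hag 0 le_rfl).trans hb, hz⟩
      · rintro ⟨h0, hz⟩
        refine ⟨fun m hm => by rw [Nat.le_zero.1 hm, h0, hb], hz, ?_⟩
        exact ne_of_bitE (m := 0) (by rw [h0, bitE_oneState]; simp; omega)
  | true =>
      rw [if_neg (by simp)]
      ext τ
      rw [mem_blkL, Finset.mem_sdiff, mem_prefixBlock_iff hk0, Finset.mem_singleton]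
      constructor
      · rintro ⟨hag, _, ho⟩
        exact ⟨(hag 0 le_rfl).trans hb, ho⟩
      · rintro ⟨h0, ho⟩
        refine ⟨fun m hm => by rw [Nat.le_zero.1 hm, h0, hb], ?_, ho⟩
        exact ne_of_bitE (m := 0) (by rw [h0, bitE_zeroState]; simp)

lemma PpSeq_zero (hk : 3 < k) : PpSeq k 0 = (bisplitter' k).init := by
  obtain ⟨hA0, hAz, hAo⟩ := wOne_props hk
  obtain ⟨hB0, hBz, hBo⟩ := wTwo_props hk
  have hAmem : wOne k ∈ blkL k 0 (wOne k) := mem_blkL.2 ⟨fun _ _ => rfl, hAz, hAo⟩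
  have hBmem : wTwo k ∈ blkL k 0 (wTwo k) := mem_blkL.2 ⟨fun _ _ => rfl, hBz, hBo⟩
  ext B
  constructor
  · intro hB
    rcases mem_PpSeq_cases hB with ⟨σ, rfl, _⟩ | rfl | rfl
    · rw [blkL_zero hk σ]
      by_cases hb : bitE σ 0 = false
      · rw [if_pos hb]; simp [bisplitter']
      · rw [if_neg hb]; simp [bisplitter']
    · simp [bisplitter']
    · simp [bisplitter']
  · intro hB
    simp only [bisplitter', Finset.mem_insert, Finset.mem_singleton] at hB
    rcases hB with rfl | rfl | rfl | rfl
    · exact (tip_mem_PpSeq 0).1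
    · unfold PpSeq
      rw [Finset.mem_union]
      left
      rw [Finset.mem_filter, Finset.mem_image]
      constructor
      · refine ⟨wOne k, Finset.mem_univ _, ?_⟩
        rw [blkL_zero hk (wOne k), if_pos hA0]
      · refine ⟨wOne k, ?_⟩
        rw [← (by rw [blkL_zero hk (wOne k), if_pos hA0] :
          blkL k 0 (wOne k) = prefixBlock k [false] \ {zeroState k})]
        exact hAmem
    · exact (tip_mem_PpSeq 0).2
    · unfold PpSeq
      rw [Finset.mem_union]
      left
      rw [Finset.mem_filter, Finset.mem_image]
      constructor
      · refine ⟨wTwo k, Finset.mem_univ _, ?_⟩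
        rw [blkL_zero hk (wTwo k), if_neg (by rw [hB0]; simp)]
      · refine ⟨wTwo k, ?_⟩
        rw [← (by rw [blkL_zero hk (wTwo k), if_neg (by rw [hB0]; simp)] :
          blkL k 0 (wTwo k) = prefixBlock k [true] \ {oneState k})]
        exact hBmem

/-- The step witnesses for `PpSeq k i ≠ PpSeq k (i+1)`. -/
def uWit (k i : ℕ) : Fin k → Bool := fun p => decide (p.val = i ∨ p.val = i + 1)
def vWit (k i : ℕ) : Fin k → Bool := fun p => decide (p.val = i ∨ p.val = i + 2)

lemma bitE_uWit (i m : ℕ) : bitE (uWit k i) m = decide ((m = i ∨ m = i + 1) ∧ m < k) := by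
  unfold bitE uWit
  split <;> rename_i h <;> simp <;> omega

lemma bitE_vWit (i m : ℕ) : bitE (vWit k i) m = decide ((m = i ∨ m = i + 2) ∧ m < k) := by
  unfold bitE vWit
  split <;> rename_i h <;> simp <;> omega

lemma uvWit_props (hk : 3 < k) {i : ℕ} (hi : i < k - 1) :
    uWit k i ≠ zeroState k ∧ uWit k i ≠ oneState k ∧
    vWit k i ≠ zeroState k ∧ vWit k i ≠ oneState k := by
  refine ⟨?_, ?_, ?_, ?_⟩
  · exact ne_of_bitE (m := i) (by rw [bitE_uWit, bitE_zeroState]; simp; omega)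
  · exact ne_of_bitE (m := i + 1) (by rw [bitE_uWit, bitE_oneState]; simp; omega)
  · exact ne_of_bitE (m := i) (by rw [bitE_vWit, bitE_zeroState]; simp; omega)
  · by_cases h0 : i = 0
    · exact ne_of_bitE (m := 2) (by rw [bitE_vWit, bitE_oneState]; simp; omega)
    · refine ne_of_bitE (m := i) ?_
      have h1 : bitE (vWit k i) i = true := by rw [bitE_vWit]; simp; omega
      have h2 : bitE (oneState k) i = false := by rw [bitE_oneState]; simp; omega
      rw [h1, h2]; simp

lemma PpSeq_valid (hk : 3 < k) {i : ℕ} (hi : i < k - 1) :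
    ValidRefinement (bisplitter' k) (PpSeq k i) (PpSeq k (i + 1)) := by
  obtain ⟨huz, huo, hvz, hvo⟩ := uvWit_props hk hi
  have huv_same : inSameBlock (PpSeq k i) (uWit k i) (vWit k i) := by
    apply same_PpSeq _ huz huo hvz hvo
    intro m hm
    rw [bitE_uWit, bitE_vWit]
    simp only [decide_eq_decide]
    omega
  have huv_nsame : ¬ inSameBlock (PpSeq k (i + 1)) (uWit k i) (vWit k i) := by
    apply not_same_PpSeq (m := i + 1) le_rfl
    have h1 : bitE (uWit k i) (i+1) = true := by rw [bitE_uWit]; simp; omega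
    have h2 : bitE (vWit k i) (i+1) = false := by rw [bitE_vWit]; simp
    rw [h1, h2]; simp
  refine ⟨?_, ?_, ?_⟩
  · -- refinement
    intro B' hB'
    rcases mem_PpSeq_cases hB' with ⟨σ, rfl, hne⟩ | rfl | rfl
    · refine ⟨blkL k i σ, ?_, ?_⟩
      · unfold PpSeq
        rw [Finset.mem_union]
        left
        rw [Finset.mem_filter, Finset.mem_image]
        obtain ⟨τ, hτ⟩ := hne
        rw [mem_blkL] at hτ
        exact ⟨⟨σ, Finset.mem_univ _, rfl⟩,
          ⟨τ, mem_blkL.2 ⟨fun m hm => hτ.1 m (by omega), hτ.2⟩⟩⟩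
      · intro τ hτ
        rw [mem_blkL] at hτ ⊢
        exact ⟨fun m hm => hτ.1 m (by omega), hτ.2⟩
    · exact ⟨{zeroState k}, (tip_mem_PpSeq i).1, le_refl _⟩
    · exact ⟨{oneState k}, (tip_mem_PpSeq i).2, le_refl _⟩
  · -- strictness
    intro he
    rw [← he] at huv_same
    exact huv_nsame huv_same
  · -- split witnesses
    intro s t hsep
    by_cases hsame : inSameBlock (PpSeq k i) s t
    · obtain ⟨B, hB, hs, ht⟩ := hsame
      rcases mem_PpSeq_cases hB with ⟨σ, rfl, _⟩ | rfl | rfl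
      · rw [mem_blkL] at hs ht
        have hag : ∀ m, m ≤ i → bitE s m = bitE t m :=
          fun m hm => (hs.1 m hm).trans (ht.1 m hm).symm
        by_cases hbit : bitE s (i + 1) = bitE t (i + 1)
        · exact absurd (same_PpSeq (fun m hm => by
            rcases Nat.lt_or_ge m (i+1) with h | h
            · exact hag m (by omega)
            · rw [(by omega : m = i + 1)]; exact hbit) hs.2.1 hs.2.2 ht.2.1 ht.2.2) hsep
        · -- split via action i
          have hik : i < k - 1 := hi
          set a : Fin (k - 1) := ⟨i, hik⟩ with ha
          have hav : a.val = i := rfl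
          right
          have key : ∀ x y : Fin k → Bool, bitE x (i+1) = true → bitE y (i+1) = false →
              (∀ m, m ≤ i → bitE x m = bitE y m) →
              SplitWitness (bisplitter' k) (PpSeq k i) x y := by
            intro x y hbx hby hagxy
            rw [splitWitness_iff]
            refine ⟨a, ?_⟩
            apply not_same_PpSeq (m := i) le_rfl
            have hbx' : bitE x (a.val + 1) = true := hbx
            have hby' : bitE y (a.val + 1) = false := hby
            rw [bsStep_self (σ := y) hby']
            rw [bitE_jump hbx', if_neg (lt_irrefl _), if_pos rfl, hagxy i le_rfl]
            simp
          cases hbs : bitE s (i + 1) with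
          | true =>
              have hbt : bitE t (i + 1) = false := by
                cases hbt : bitE t (i+1)
                · rfl
                · exact absurd (hbs.trans hbt.symm) hbit
              exact Or.inl (key s t hbs hbt hag)
          | false =>
              have hbt : bitE t (i + 1) = true := by
                cases hbt : bitE t (i+1)
                · exact absurd (hbs.trans hbt.symm) hbit
                · rfl
              exact Or.inr (key t s hbt hbs (fun m hm => (hag m hm).symm))
      · rw [Finset.mem_singleton] at hs ht
        subst hs
        rw [ht] at hsep
        exact absurd (inSameBlock_refl (PpSeq_partition hk (i+1)) _) hsep
      · rw [Finset.mem_singleton] at hs ht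
        subst hs
        rw [ht] at hsep
        exact absurd (inSameBlock_refl (PpSeq_partition hk (i+1)) _) hsep
    · exact Or.inl hsame

lemma PpSeq_last_singletons (hk : 3 < k) {B : Finset (Fin k → Bool)}
    (hB : B ∈ PpSeq k (k - 1)) : ∃ s, B = {s} := by
  rcases mem_PpSeq_cases hB with ⟨σ, rfl, hne⟩ | rfl | rfl
  · obtain ⟨τ, hτ⟩ := hne
    refine ⟨τ, ?_⟩
    ext τ'
    rw [Finset.mem_singleton, mem_blkL]
    constructor
    · rintro ⟨hag, _⟩
      apply bitE_ext
      intro m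
      by_cases hm : m < k
      · rw [hag m (by omega), ((mem_blkL.1 hτ).1 m (by omega)).symm]
      · rw [bitE_of_ge (by omega), bitE_of_ge (by omega)]
    · rintro rfl
      exact mem_blkL.1 hτ
  · exact ⟨_, rfl⟩
  · exact ⟨_, rfl⟩

lemma PpSeq_stable (hk : 3 < k) : IsStablePartition (bisplitter' k) (PpSeq k (k - 1)) := by
  intro B hB C _
  obtain ⟨s, rfl⟩ := PpSeq_last_singletons hk hB
  intro a
  by_cases h : bsStep s a ∈ C
  · left
    intro s' hs'
    rw [Finset.mem_singleton] at hs'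
    subst hs'
    exact ⟨bsStep s' a, h, rfl⟩
  · right
    intro s' hs'
    rw [Finset.mem_singleton] at hs'
    subst hs'
    rintro ⟨t', ht', htr⟩
    rw [bisp_tr_iff] at htr
    exact h (htr ▸ ht')

theorem PpSeq_validSeq (hk : 3 < k) :
    ValidRefinementSeq (bisplitter' k) (k - 1) (PpSeq k) := by
  refine ⟨PpSeq_zero hk, fun i _ => PpSeq_partition hk i, fun i hi => PpSeq_valid hk hi,
    PpSeq_stable hk⟩

end Existence2
/-- For k > 3, the updated bisplitter satisfies
`IRC(B'_k) ≥ (k-3)·2^(k-3)`, which with `n = 2^k` states is `(n/8)·log₂(n/8)`,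
i.e. partition refinement with an end structure oracle is `Ω(n log n)`. -/
theorem updated_bisplitter_lower_bound
    (k : ℕ) (hk : 3 < k) :
    (k - 3) * 2 ^ (k - 3) ≤ IRC (bisplitter' k) ∧
    2 ^ k / 8 * Nat.log 2 (2 ^ k / 8) ≤ IRC (bisplitter' k) := by
  have hne : {c | ∃ n seq, ValidRefinementSeq (bisplitter' k) n seq ∧ IRCseq n seq = c}.Nonempty :=
    ⟨IRCseq (k-1) (PpSeq k), ⟨k-1, PpSeq k, PpSeq_validSeq hk, rfl⟩⟩
  obtain ⟨n, seq, hv, hc⟩ := Nat.sInf_mem hne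
  have h1 : (k - 3) * 2 ^ (k - 3) ≤ IRC (bisplitter' k) := by
    unfold IRC
    rw [← hc]
    exact lower_bound_any_seq hk hv
  refine ⟨h1, ?_⟩
  have h8 : (2:ℕ) ^ k / 8 = 2 ^ (k - 3) := by
    rw [show (8:ℕ) = 2 ^ 3 by norm_num, Nat.pow_div (by omega) (by norm_num)]
  rw [h8, Nat.log_pow (by norm_num), Nat.mul_comm]
  exact h1
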